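/- arXiv:1910.06290 — 2 statements merged into one kernel-verified Lean document; each statement's English description precedes it below -/
import Mathlib

section
/- Let λ > 0 and let γ = (a,b) : ℝ → ℝ² be a maximal unit-speed solution of a'' = λ(b')²/a, b'' = -λb'a'/a with a(0) = x > 0 and b'(0) = v > 0. Then a(s) ≥ (v·x^λ)^{1/λ} > 0 and b'(s) > 0 for all s in the interval of existence. -/
/-- Along a unit speed solution of a'' = λ(b')²/a, b'' = -λb'a'/a with
a(0) = x > 0 and b'(0) = v > 0, one has a ≥ (v·x^λ)^{1/λ} > 0 and b' > 0. -/
theorem stmt_7 (lam : ℝ) (hlam : 0 < lam)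
    (a b a' b' a'' b'' : ℝ → ℝ) (I : Set ℝ) (hI : I.OrdConnected)
    (h0 : (0 : ℝ) ∈ I)
    (hda : ∀ s ∈ I, HasDerivAt a (a' s) s)
    (hdb : ∀ s ∈ I, HasDerivAt b (b' s) s)
    (hda' : ∀ s ∈ I, HasDerivAt a' (a'' s) s)
    (hdb' : ∀ s ∈ I, HasDerivAt b' (b'' s) s)
    (hane : ∀ s ∈ I, a s ≠ 0)
    (hunit : ∀ s ∈ I, (a' s) ^ 2 + (b' s) ^ 2 = 1)
    (hode : ∀ s ∈ I, a'' s = lam * (b' s) ^ 2 / a s ∧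
      b'' s = -lam * b' s * a' s / a s)
    (x v : ℝ) (hx : a 0 = x) (hxpos : 0 < x) (hv : b' 0 = v) (hvpos : 0 < v) :
    (0 : ℝ) < (v * x ^ lam) ^ (1 / lam) ∧
      ∀ s ∈ I, (v * x ^ lam) ^ (1 / lam) ≤ a s ∧ 0 < b' s := by
  have hz0 : 0 < v * x ^ lam := mul_pos hvpos (Real.rpow_pos_of_pos hxpos lam)
  refine ⟨Real.rpow_pos_of_pos hz0 _, ?_⟩
  -- a > 0 on I
  have apos : ∀ s ∈ I, 0 < a s := by
    intro s hs
    by_contra hle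
    push_neg at hle
    have hneg : a s < 0 := lt_of_le_of_ne hle (hane s hs)
    have hsub : Set.uIcc 0 s ⊆ I := hI.uIcc_subset h0 hs
    have hcont : ContinuousOn a (Set.uIcc 0 s) := fun t ht =>
      (hda t (hsub ht)).continuousAt.continuousWithinAt
    have : (0 : ℝ) ∈ Set.uIcc (a 0) (a s) := by
      rw [Set.mem_uIcc]
      right; exact ⟨hneg.le, hx ▸ hxpos.le⟩
    obtain ⟨t, ht, hat⟩ := intermediate_value_uIcc hcont this
    exact hane t (hsub ht) hat
  -- conserved quantity
  set f : ℝ → ℝ := fun t => b' t * a t ^ lam with hf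
  have hderiv : ∀ t ∈ I, HasDerivAt f 0 t := by
    intro t ht
    have hd : HasDerivAt f
        (b'' t * a t ^ lam + b' t * (a' t * lam * a t ^ (lam - 1))) t :=
      (hdb' t ht).mul ((hda t ht).rpow_const (Or.inl (hane t ht)))
    have hat : 0 < a t := apos t ht
    have hb'' := (hode t ht).2
    have key : b'' t * a t ^ lam + b' t * (a' t * lam * a t ^ (lam - 1)) = 0 := by
      rw [hb'', Real.rpow_sub hat, Real.rpow_one]
      field_simp
      ring
    rwa [key] at hd
  have hconst : ∀ s ∈ I, f s = v * x ^ lam := by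
    have hf0 : f 0 = v * x ^ lam := by simp [hf, hv, hx]
    intro s hs
    have hsub : Set.uIcc 0 s ⊆ I := hI.uIcc_subset h0 hs
    rcases le_total 0 s with hcase | hcase
    · have := constant_of_has_deriv_right_zero (f := f) (a := 0) (b := s)
        (fun t ht => (hderiv t (hsub (by rwa [Set.uIcc_of_le hcase]))).continuousAt.continuousWithinAt)
        (fun t ht => (hderiv t (hsub (by rw [Set.uIcc_of_le hcase]; exact Set.Ico_subset_Icc_self ht))).hasDerivWithinAt)
        s (Set.right_mem_Icc.2 hcase)
      rw [this, hf0]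
    · have := constant_of_has_deriv_right_zero (f := f) (a := s) (b := 0)
        (fun t ht => (hderiv t (hsub (by rwa [Set.uIcc_of_ge hcase]))).continuousAt.continuousWithinAt)
        (fun t ht => (hderiv t (hsub (by rw [Set.uIcc_of_ge hcase]; exact Set.Ico_subset_Icc_self ht))).hasDerivWithinAt)
        0 (Set.right_mem_Icc.2 hcase)
      rw [← this, hf0]
  intro s hs
  have hat : 0 < a s := apos s hs
  have hapow : 0 < a s ^ lam := Real.rpow_pos_of_pos hat lam
  have hcons : b' s * a s ^ lam = v * x ^ lam := hconst s hs
  have hb'pos : 0 < b' s := by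
    by_contra h
    push_neg at h
    have : b' s * a s ^ lam ≤ 0 := mul_nonpos_of_nonpos_of_nonneg h hapow.le
    linarith [hcons ▸ this]
  refine ⟨?_, hb'pos⟩
  have hb'le : b' s ≤ 1 := by
    nlinarith [hunit s hs, sq_nonneg (a' s), hb'pos]
  have hge : v * x ^ lam ≤ a s ^ lam := by
    calc v * x ^ lam = b' s * a s ^ lam := hcons.symm
    _ ≤ 1 * a s ^ lam := by nlinarith
    _ = a s ^ lam := one_mul _
  calc (v * x ^ lam) ^ (1 / lam) ≤ (a s ^ lam) ^ (1 / lam) :=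
        Real.rpow_le_rpow hz0.le hge (by positivity)
    _ = a s := by
        rw [← Real.rpow_mul hat.le, mul_one_div, div_self hlam.ne', Real.rpow_one]
end

section
/- Let k ≥ 3, λ = (k-2)/4, and let γ = (a,b) : [R,0] → ℝ² be a unit speed curve with a > 0, κ = -λσ (where κ = a'b'' - a''b', σ = b'/a), a' > 0 on (R,0], and a'(R) = 0. Then σ is monotonically decreasing on (R, 0]; in particular σ(s) ≥ σ(0) for all s ∈ [R, 0]. -/
/-!
Differentiating the unit speed condition `a'² + b'² = 1` gives `a'a'' + b'b'' = 0`, hence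
`b'' = a' κ = -λ a' σ`. Therefore `σ' = (b'' a - b' a') / a² = -(λ + 1) a' b' / a² ≤ 0`
wherever `a' ≥ 0`, because `λ + 1 = (k + 2) / 4 > 0`.
-/

open Filter Topology Set

theorem HasDerivAt.mul_add_mul_eq_zero_of_eventually_sq_add_sq_eq {f g : ℝ → ℝ}
    {f' g' s c : ℝ} (hf : HasDerivAt f f' s) (hg : HasDerivAt g g' s)
    (hc : ∀ᶠ t in 𝓝 s, f t ^ 2 + g t ^ 2 = c) : f s * f' + g s * g' = 0 := by
  have hsum : HasDerivAt (fun t => f t ^ 2 + g t ^ 2) (2 * (f s * f' + g s * g')) s :=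
    ((hf.fun_pow 2).fun_add (hg.fun_pow 2)).congr_deriv (by norm_num; ring)
  have := hsum.unique ((hasDerivAt_const s c).congr_of_eventuallyEq hc)
  linarith

theorem eq_mul_cross_of_sq_add_sq_eq_one {R : Type*} [CommRing R] {x y x' y' : R}
    (hunit : x ^ 2 + y ^ 2 = 1) (horth : x * x' + y * y' = 0) :
    y' = x * (x * y' - x' * y) := by
  linear_combination (-y') * hunit + y * horth

theorem mul_sub_mul_eq_of_unit_speed_of_curvature {a a' a'' b' b'' lam : ℝ} (ha : a ≠ 0)
    (hunit : a' ^ 2 + b' ^ 2 = 1) (horth : a' * a'' + b' * b'' = 0)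
    (hκ : a' * b'' - a'' * b' = -lam * (b' / a)) :
    b'' * a - b' * a' = -(lam + 1) * a' * b' := by
  have hb'' := eq_mul_cross_of_sq_add_sq_eq_one hunit horth
  rw [hκ] at hb''
  rw [hb'']
  field_simp
  ring

theorem stmt_19_general (k : ℕ) (lam : ℝ) (hlam : lam = ((k : ℝ) - 2) / 4)
    (R : ℝ) (hR : R < 0)
    (a a' b' a'' b'' : ℝ → ℝ)
    (hda : ∀ s ∈ Set.Icc R 0, HasDerivAt a (a' s) s)
    (hda' : ∀ s ∈ Set.Icc R 0, HasDerivAt a' (a'' s) s)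
    (hdb' : ∀ s ∈ Set.Icc R 0, HasDerivAt b' (b'' s) s)
    (hunit : ∀ s ∈ Set.Icc R 0, (a' s) ^ 2 + (b' s) ^ 2 = 1)
    (hapos : ∀ s ∈ Set.Icc R 0, 0 < a s)
    (hbpos : ∀ s ∈ Set.Icc R 0, 0 < b' s)
    (hκ : ∀ s ∈ Set.Icc R 0,
      a' s * b'' s - a'' s * b' s = -lam * (b' s / a s))
    (ha' : ∀ s ∈ Set.Ioc R 0, 0 < a' s) :
    AntitoneOn (fun s => b' s / a s) (Set.Ioc R 0) ∧
      ∀ s ∈ Set.Icc R 0, b' 0 / a 0 ≤ b' s / a s := by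
  have hlam1 : 0 ≤ lam + 1 := by
    rw [hlam]
    linarith [k.cast_nonneg (α := ℝ)]
  have hσ : ∀ s ∈ Icc R 0, HasDerivAt (fun s => b' s / a s)
      ((b'' s * a s - b' s * a' s) / a s ^ 2) s := fun s hs =>
    (hdb' s hs).div (hda s hs) (hapos s hs).ne'
  have hanti : AntitoneOn (fun s => b' s / a s) (Icc R 0) := by
    refine antitoneOn_of_hasDerivWithinAt_nonpos (convex_Icc R 0)
      (f' := fun s => (b'' s * a s - b' s * a' s) / a s ^ 2)
      (fun s hs => (hσ s hs).continuousAt.continuousWithinAt) (fun s hs => ?_) (fun s hs => ?_)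
    · rw [interior_Icc] at hs ⊢
      exact (hσ s (Ioo_subset_Icc_self hs)).hasDerivWithinAt
    · rw [interior_Icc] at hs
      have hs' := Ioo_subset_Icc_self hs
      have horth := (hda' s hs').mul_add_mul_eq_zero_of_eventually_sq_add_sq_eq (hdb' s hs')
        (eventually_of_mem (Icc_mem_nhds hs.1 hs.2) hunit)
      rw [mul_sub_mul_eq_of_unit_speed_of_curvature (hapos s hs').ne' (hunit s hs') horth
        (hκ s hs')]
      have := mul_nonneg (mul_nonneg hlam1 (ha' s (Ioo_subset_Ioc_self hs)).le) (hbpos s hs').le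
      exact div_nonpos_of_nonpos_of_nonneg (by linarith) (sq_nonneg _)
  exact ⟨hanti.mono Ioc_subset_Icc_self, fun s hs => hanti hs (right_mem_Icc.mpr hR.le) hs.2⟩

/-- Monotonicity claim from Corollary 4.12: along a unit speed curve γ = (a,b)
on [R,0] with a > 0, b' > 0, curvature κ = -λσ (λ = (k-2)/4, σ = b'/a),
a' > 0 on (R,0] and a'(R) = 0, the function σ is monotonically decreasing on
(R,0]; in particular σ ≥ σ(0) on [R,0]. -/
theorem stmt_19 (k : ℕ) (hk : 3 ≤ k) (lam : ℝ) (hlam : lam = ((k : ℝ) - 2) / 4)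
    (R : ℝ) (hR : R < 0)
    (a b a' b' a'' b'' : ℝ → ℝ)
    (hda : ∀ s ∈ Set.Icc R 0, HasDerivAt a (a' s) s)
    (hdb : ∀ s ∈ Set.Icc R 0, HasDerivAt b (b' s) s)
    (hda' : ∀ s ∈ Set.Icc R 0, HasDerivAt a' (a'' s) s)
    (hdb' : ∀ s ∈ Set.Icc R 0, HasDerivAt b' (b'' s) s)
    (hunit : ∀ s ∈ Set.Icc R 0, (a' s) ^ 2 + (b' s) ^ 2 = 1)
    (hapos : ∀ s ∈ Set.Icc R 0, 0 < a s)
    (hbpos : ∀ s ∈ Set.Icc R 0, 0 < b' s)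
    (hκ : ∀ s ∈ Set.Icc R 0,
      a' s * b'' s - a'' s * b' s = -lam * (b' s / a s))
    (ha' : ∀ s ∈ Set.Ioc R 0, 0 < a' s) (ha'R : a' R = 0) :
    AntitoneOn (fun s => b' s / a s) (Set.Ioc R 0) ∧
      ∀ s ∈ Set.Icc R 0, b' 0 / a 0 ≤ b' s / a s :=
  stmt_19_general k lam hlam R hR a a' b' a'' b'' hda hda' hdb' hunit hapos hbpos hκ ha'
end
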